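/- Let q > 0, 0 < a₂ < a₁, 0 < b₂ < b₁, c > a₁ + b₁, and set g(z) = F(a₁,b₁;c;z) - q F(a₂,b₂;c;z). Suppose g(z₁) ≥ 0 for some z₁ ∈ [0,1], and let N ∈ ℕ₀ satisfy (a₁)_n(b₁)_n ≤ q(a₂)_n(b₂)_n for n < N and (a₁)_n(b₁)_n > q(a₂)_n(b₂)_n for n ≥ N. Then with p = (a₁+N)(b₁+N)/(c+N), the differential inequality g'(z)/p > g(z) holds for all z ∈ [0,1). -/

import Mathlib

open Real Set MeasureTheory

/-- Pochhammer symbol (rising factorial) for a real argument. -/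
noncomputable def poch (x : ℝ) (n : ℕ) : ℝ := ∏ i ∈ Finset.range n, (x + i)

/-- Gauss hypergeometric series. -/
noncomputable def hyperF (a b c z : ℝ) : ℝ :=
  ∑' n : ℕ, poch a n * poch b n / (poch c n * (n.factorial : ℝ)) * z ^ n

open Filter Topology

lemma poch_pos {x : ℝ} (hx : 0 < x) (n : ℕ) : 0 < poch x n :=
  Finset.prod_pos fun i _ => by positivity

lemma poch_succ (x : ℝ) (n : ℕ) : poch x (n + 1) = poch x n * (x + n) :=
  Finset.prod_range_succ _ _

lemma aux_tendsto_zero (C : ℝ) {f : ℕ → ℝ} (hf : Tendsto f atTop atTop) :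
    Tendsto (fun n : ℕ => C / f n) atTop (𝓝 0) :=
  Tendsto.div_atTop tendsto_const_nhds hf

lemma tendsto_add_cast (e : ℝ) : Tendsto (fun n : ℕ => e + (n : ℝ)) atTop atTop :=
  tendsto_atTop_add_const_left _ e tendsto_natCast_atTop_atTop

lemma summable_master {a b c x : ℝ} (ha : 0 < a) (hb : 0 < b) (hc : 0 < c)
    (hx : 0 ≤ x) (hx1 : x < 1) :
    Summable (fun n : ℕ =>
      ((n : ℝ) + 1) * (poch a n * poch b n / (poch c n * (n.factorial : ℝ))) * x ^ n) := by
  set f : ℕ → ℝ := fun n =>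
      ((n : ℝ) + 1) * (poch a n * poch b n / (poch c n * (n.factorial : ℝ))) * x ^ n with hf
  have hfpos : ∀ n, 0 ≤ f n := by
    intro n
    have h1 := poch_pos ha n
    have h2 := poch_pos hb n
    have h3 := poch_pos hc n
    have h4 : (0:ℝ) < (n.factorial : ℝ) := by positivity
    have h5 : (0:ℝ) ≤ (n:ℝ) + 1 := by positivity
    have h6 : (0:ℝ) ≤ x ^ n := pow_nonneg hx n
    positivity
  set ρ : ℕ → ℝ := fun n =>
      (((n:ℝ) + 2) / ((n:ℝ) + 1)) * ((a + n) / ((n:ℝ) + 1)) * ((b + n) / (c + n)) * x with hρ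
  have hcn : ∀ n : ℕ, (0:ℝ) < c + n := fun n => by
    have : (0:ℝ) ≤ (n:ℝ) := n.cast_nonneg; linarith
  have hn1 : ∀ n : ℕ, (0:ℝ) < (n:ℝ) + 1 := fun n => by positivity
  have hrec : ∀ n, f (n + 1) = ρ n * f n := by
    intro n
    have h1 : poch c n ≠ 0 := (poch_pos hc n).ne'
    have h2 : (n.factorial : ℝ) ≠ 0 := by positivity
    have h3 : c + (n:ℝ) ≠ 0 := (hcn n).ne'
    have h4 : ((n:ℝ) + 1) ≠ 0 := (hn1 n).ne'
    simp only [hf, hρ, poch_succ, Nat.factorial_succ]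
    push_cast
    field_simp
    ring
  have hρt : Tendsto ρ atTop (𝓝 x) := by
    have t1 : Tendsto (fun n : ℕ => ((n:ℝ) + 2) / ((n:ℝ) + 1)) atTop (𝓝 1) := by
      have he : (fun n : ℕ => ((n:ℝ) + 2) / ((n:ℝ) + 1))
          = fun n : ℕ => 1 + 1 / ((n:ℝ) + 1) := by
        funext n; field_simp; ring
      rw [he]
      have := aux_tendsto_zero 1 (tendsto_add_cast 1)
      simp only [show ∀ n : ℕ, (1:ℝ) + (n:ℝ) = (n:ℝ) + 1 from fun n => by ring] at this
      simpa using tendsto_const_nhds.add this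
    have t2 : Tendsto (fun n : ℕ => (a + (n:ℝ)) / ((n:ℝ) + 1)) atTop (𝓝 1) := by
      have he : (fun n : ℕ => (a + (n:ℝ)) / ((n:ℝ) + 1))
          = fun n : ℕ => 1 + (a - 1) / ((n:ℝ) + 1) := by
        funext n; have := (hn1 n).ne'; field_simp; ring
      rw [he]
      have := aux_tendsto_zero (a - 1) (tendsto_add_cast 1)
      simp only [show ∀ n : ℕ, (1:ℝ) + (n:ℝ) = (n:ℝ) + 1 from fun n => by ring] at this
      simpa using tendsto_const_nhds.add this
    have t3 : Tendsto (fun n : ℕ => (b + (n:ℝ)) / (c + (n:ℝ))) atTop (𝓝 1) := by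
      have he : (fun n : ℕ => (b + (n:ℝ)) / (c + (n:ℝ)))
          = fun n : ℕ => 1 + (b - c) / (c + (n:ℝ)) := by
        funext n; have := (hcn n).ne'; field_simp; ring
      rw [he]
      have := aux_tendsto_zero (b - c) (tendsto_add_cast c)
      simpa using tendsto_const_nhds.add this
    have := ((t1.mul t2).mul t3).mul_const x
    simpa using this
  have hρnn : ∀ n, 0 ≤ ρ n := by
    intro n
    have h0 : (0:ℝ) ≤ (n:ℝ) := n.cast_nonneg
    apply mul_nonneg (mul_nonneg (mul_nonneg _ _) _) hx
    · exact div_nonneg (by linarith) (by linarith)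
    · exact div_nonneg (by linarith) (by linarith)
    · exact div_nonneg (by linarith) (le_of_lt (hcn n))
  have hxr2 : x < (x + 1) / 2 := by linarith
  refine summable_of_ratio_norm_eventually_le (r := (x + 1) / 2) (by linarith) ?_
  filter_upwards [hρt.eventually_lt_const hxr2] with n hn
  rw [Real.norm_of_nonneg (hfpos _), Real.norm_of_nonneg (hfpos _), hrec]
  exact mul_le_mul_of_nonneg_right hn.le (hfpos n)

lemma summable_shift {a b c x : ℝ} (ha : 0 < a) (hb : 0 < b) (hc : 0 < c)
    (hx : 0 ≤ x) (hx1 : x < 1) :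
    Summable (fun n : ℕ =>
      ((n : ℝ) + 1) * (poch a (n+1) * poch b (n+1) / (poch c (n+1) * ((n+1).factorial : ℝ)))
        * x ^ n) := by
  have hm0 : (0:ℝ) < min c 1 := lt_min hc one_pos
  refine Summable.of_nonneg_of_le (fun n => ?_) (fun n => ?_)
    (((summable_master ha hb hc hx hx1).mul_left ((a+1)*(b+1)/min c 1)))
  · have h1 := poch_pos ha (n+1)
    have h2 := poch_pos hb (n+1)
    have h3 := poch_pos hc (n+1)
    have h4 : (0:ℝ) < ((n+1).factorial : ℝ) := by positivity
    have h6 : (0:ℝ) ≤ x ^ n := pow_nonneg hx n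
    positivity
  · have hn0 : (0:ℝ) ≤ (n:ℝ) := n.cast_nonneg
    have hcn : (0:ℝ) < c + n := by linarith
    have hPc : (0:ℝ) < poch c n := poch_pos hc n
    have hfac : (0:ℝ) < (n.factorial : ℝ) := by positivity
    have hw : (0:ℝ) ≤ poch a n * poch b n / (poch c n * (n.factorial : ℝ)) := by
      have := poch_pos ha n; have := poch_pos hb n; positivity
    have hlhs : ((n : ℝ) + 1) * (poch a (n+1) * poch b (n+1) / (poch c (n+1) * ((n+1).factorial : ℝ)))
        * x ^ n
        = (poch a n * poch b n / (poch c n * (n.factorial : ℝ))) * x ^ n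
          * ((a + n) * (b + n) / (c + n)) := by
      simp only [poch_succ, Nat.factorial_succ]
      push_cast
      field_simp
    rw [hlhs]
    have key : (a + (n:ℝ)) * (b + n) / (c + n) ≤ (a+1)*(b+1)/min c 1 * ((n:ℝ) + 1) := by
      rw [div_le_iff₀ hcn]
      have h1 : a + (n:ℝ) ≤ (a+1)*((n:ℝ)+1) := by nlinarith
      have h2 : b + (n:ℝ) ≤ (b+1)*((n:ℝ)+1) := by nlinarith
      have h3 : min c 1 * ((n:ℝ)+1) ≤ c + n := by
        have hmc : min c 1 ≤ c := min_le_left _ _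
        have hm1 : min c 1 ≤ 1 := min_le_right _ _
        nlinarith
      have h4 : (a+1)*(b+1)/min c 1 * min c 1 = (a+1)*(b+1) := div_mul_cancel₀ _ hm0.ne'
      have h5 : (a + (n:ℝ)) * (b + n) ≤ (a+1)*(b+1)*(((n:ℝ)+1)*((n:ℝ)+1)) := by
        have := mul_le_mul h1 h2 (by linarith) (by positivity)
        nlinarith
      have h6 : (0:ℝ) < (a+1)*(b+1)/min c 1 := by positivity
      calc (a + (n:ℝ)) * (b + n) ≤ (a+1)*(b+1)*(((n:ℝ)+1)*((n:ℝ)+1)) := h5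
        _ = ((a+1)*(b+1)/min c 1) * (((n:ℝ)+1) * (min c 1 * ((n:ℝ)+1))) := by
            field_simp
        _ ≤ ((a+1)*(b+1)/min c 1) * (((n:ℝ)+1) * (c + n)) := by
            apply mul_le_mul_of_nonneg_left _ h6.le
            apply mul_le_mul_of_nonneg_left h3 (by linarith)
        _ = (a+1)*(b+1)/min c 1 * ((n:ℝ) + 1) * (c + n) := by ring
    have hwx : (0:ℝ) ≤ (poch a n * poch b n / (poch c n * (n.factorial : ℝ))) * x ^ n :=
      mul_nonneg hw (pow_nonneg hx n)
    calc (poch a n * poch b n / (poch c n * (n.factorial : ℝ))) * x ^ n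
          * ((a + n) * (b + n) / (c + n))
        ≤ (poch a n * poch b n / (poch c n * (n.factorial : ℝ))) * x ^ n
          * ((a+1)*(b+1)/min c 1 * ((n:ℝ) + 1)) := mul_le_mul_of_nonneg_left key hwx
      _ = (a+1)*(b+1)/min c 1
          * (((n : ℝ) + 1) * (poch a n * poch b n / (poch c n * (n.factorial : ℝ))) * x ^ n) := by
            ring

set_option maxHeartbeats 2000000 in
theorem hyperF_diff_differential_inequality (q a₁ a₂ b₁ b₂ c : ℝ) (hq : 0 < q)
    (ha₂ : 0 < a₂) (ha : a₂ < a₁) (hb₂ : 0 < b₂) (hb : b₂ < b₁) (hc : a₁ + b₁ < c)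
    (g : ℝ → ℝ) (hg : ∀ z, g z = hyperF a₁ b₁ c z - q * hyperF a₂ b₂ c z)
    (z₁ : ℝ) (hz₁ : z₁ ∈ Set.Icc (0 : ℝ) 1) (hgz₁ : 0 ≤ g z₁)
    (N : ℕ)
    (hN₁ : ∀ n : ℕ, n < N → poch a₁ n * poch b₁ n ≤ q * (poch a₂ n * poch b₂ n))
    (hN₂ : ∀ n : ℕ, N ≤ n → q * (poch a₂ n * poch b₂ n) < poch a₁ n * poch b₁ n) :
    ∀ z ∈ Set.Ico (0 : ℝ) 1,
      g z < deriv g z / ((a₁ + N) * (b₁ + N) / (c + N)) := by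
  intro z hz
  obtain ⟨hz0, hz1⟩ := hz
  have ha₁ : 0 < a₁ := ha₂.trans ha
  have hb₁ : 0 < b₁ := hb₂.trans hb
  have hc0 : 0 < c := by linarith
  have hN0 : (0:ℝ) ≤ (N:ℝ) := N.cast_nonneg
  set r : ℝ := (z + 1) / 2 with hrdef
  have hr0 : 0 < r := by rw [hrdef]; linarith
  have hzr : z < r := by rw [hrdef]; linarith
  have hr1 : r < 1 := by rw [hrdef]; linarith
  have hzabs : |z| ≤ r := by rw [abs_of_nonneg hz0]; linarith
  -- weights
  set wA : ℕ → ℝ := fun n => poch a₁ n * poch b₁ n / (poch c n * (n.factorial : ℝ)) with hwA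
  set wB : ℕ → ℝ := fun n => poch a₂ n * poch b₂ n / (poch c n * (n.factorial : ℝ)) with hwB
  set d : ℕ → ℝ := fun n =>
    (poch a₁ n * poch b₁ n - q * (poch a₂ n * poch b₂ n)) / (poch c n * (n.factorial : ℝ))
    with hd
  have hwApos : ∀ n, 0 < wA n := by
    intro n
    have := poch_pos ha₁ n; have := poch_pos hb₁ n; have := poch_pos hc0 n
    have : (0:ℝ) < (n.factorial : ℝ) := by positivity
    simp only [hwA]; positivity
  have hwBpos : ∀ n, 0 < wB n := by
    intro n
    have := poch_pos ha₂ n; have := poch_pos hb₂ n; have := poch_pos hc0 n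
    have : (0:ℝ) < (n.factorial : ℝ) := by positivity
    simp only [hwB]; positivity
  have hdeq : ∀ n, d n = wA n - q * wB n := by
    intro n; simp only [hd, hwA, hwB]; ring
  have habs : ∀ n, |d n| ≤ wA n + q * wB n := by
    intro n
    rw [hdeq n, abs_le]
    constructor <;> nlinarith [hwApos n, hwBpos n, mul_pos hq (hwBpos n)]
  -- summability
  have SmA : Summable (fun n : ℕ => ((n:ℝ)+1) * wA n * r ^ n) :=
    summable_master ha₁ hb₁ hc0 hr0.le hr1
  have SmB : Summable (fun n : ℕ => ((n:ℝ)+1) * wB n * r ^ n) :=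
    summable_master ha₂ hb₂ hc0 hr0.le hr1
  have SsA : Summable (fun n : ℕ => ((n:ℝ)+1) * wA (n+1) * r ^ n) :=
    summable_shift ha₁ hb₁ hc0 hr0.le hr1
  have SsB : Summable (fun n : ℕ => ((n:ℝ)+1) * wB (n+1) * r ^ n) :=
    summable_shift ha₂ hb₂ hc0 hr0.le hr1
  have hpow : ∀ y : ℝ, |y| ≤ r → ∀ n : ℕ, |y| ^ n ≤ r ^ n := fun y hy n =>
    pow_le_pow_left₀ (abs_nonneg y) hy n
  have SwAy : ∀ y : ℝ, |y| ≤ r → Summable (fun n : ℕ => wA n * y ^ n) := by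
    intro y hy
    refine Summable.of_norm_bounded SmA ?_
    intro n
    rw [norm_mul, norm_pow, Real.norm_of_nonneg (hwApos n).le]
    calc wA n * |y| ^ n ≤ wA n * r ^ n :=
          mul_le_mul_of_nonneg_left (hpow y hy n) (hwApos n).le
      _ ≤ ((n:ℝ)+1) * wA n * r ^ n := by
          nlinarith [hwApos n, pow_nonneg hr0.le n, (n.cast_nonneg : (0:ℝ) ≤ n),
            mul_nonneg (hwApos n).le (pow_nonneg hr0.le n)]
  have SwBy : ∀ y : ℝ, |y| ≤ r → Summable (fun n : ℕ => wB n * y ^ n) := by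
    intro y hy
    refine Summable.of_norm_bounded SmB ?_
    intro n
    rw [norm_mul, norm_pow, Real.norm_of_nonneg (hwBpos n).le]
    calc wB n * |y| ^ n ≤ wB n * r ^ n :=
          mul_le_mul_of_nonneg_left (hpow y hy n) (hwBpos n).le
      _ ≤ ((n:ℝ)+1) * wB n * r ^ n := by
          nlinarith [hwBpos n, pow_nonneg hr0.le n, (n.cast_nonneg : (0:ℝ) ≤ n),
            mul_nonneg (hwBpos n).le (pow_nonneg hr0.le n)]
  have SdY : ∀ y : ℝ, |y| ≤ r → Summable (fun n : ℕ => d n * y ^ n) := by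
    intro y hy
    refine Summable.of_norm_bounded
      (g := fun n => wA n * r ^ n + q * (wB n * r ^ n)) ?_ ?_
    · exact (SwAy r (by rw [abs_of_nonneg hr0.le]))|>.add ((SwBy r (by rw [abs_of_nonneg hr0.le])).mul_left q)
    · intro n
      rw [norm_mul, norm_pow]
      calc |d n| * |y| ^ n ≤ (wA n + q * wB n) * r ^ n := by
            apply mul_le_mul (habs n) (hpow y hy n) (pow_nonneg (abs_nonneg y) n)
            nlinarith [hwApos n, hwBpos n, mul_pos hq (hwBpos n)]
        _ = wA n * r ^ n + q * (wB n * r ^ n) := by ring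
  -- g as a power series on (-r, r)
  have hgy : ∀ y : ℝ, |y| ≤ r → g y = ∑' n : ℕ, d n * y ^ n := by
    intro y hy
    have h1 := SwAy y hy
    have h2 := SwBy y hy
    have e1 : hyperF a₁ b₁ c y = ∑' n : ℕ, wA n * y ^ n := rfl
    have e2 : hyperF a₂ b₂ c y = ∑' n : ℕ, wB n * y ^ n := rfl
    rw [hg y, e1, e2, ← tsum_mul_left, ← Summable.tsum_sub h1 (h2.mul_left q)]
    exact tsum_congr fun n => by rw [hdeq n]; ring
  -- derivative via term-by-term differentiation
  have hmem_abs : ∀ y ∈ Ioo (-r) r, |y| ≤ r := fun y hy => (abs_lt.2 ⟨hy.1, hy.2⟩).le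
  have hzs : z ∈ Ioo (-r) r := ⟨by linarith, hzr⟩
  set u : ℕ → ℝ := fun n => (wA n + q * wB n) * ((n:ℝ) * r ^ (n - 1)) with hu
  have husum : Summable u := by
    have hshift : Summable (fun n : ℕ => u (n+1)) := by
      refine Summable.congr (SsA.add (SsB.mul_left q)) (fun n => ?_)
      simp only [hu, Nat.add_sub_cancel]
      push_cast
      ring
    exact (summable_nat_add_iff 1).mp hshift
  have hbound : ∀ (n : ℕ), ∀ y ∈ Ioo (-r) r, ‖d n * ((n:ℝ) * y ^ (n-1))‖ ≤ u n := by
    intro n y hy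
    rw [norm_mul, norm_mul, norm_pow, Real.norm_natCast]
    have h1 : |y| ^ (n-1) ≤ r ^ (n-1) := pow_le_pow_left₀ (abs_nonneg y) (hmem_abs y hy) _
    have h2 : (0:ℝ) ≤ (n:ℝ) := n.cast_nonneg
    simp only [hu]
    apply mul_le_mul (habs n) (mul_le_mul_of_nonneg_left h1 h2)
      (by positivity) (by nlinarith [hwApos n, hwBpos n, mul_pos hq (hwBpos n)])
  have hderivg : HasDerivAt g (∑' n : ℕ, d n * ((n:ℝ) * z ^ (n-1))) z := by
    have H := hasDerivAt_tsum_of_isPreconnected husum isOpen_Ioo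
      (convex_Ioo (-r) r).isPreconnected
      (g := fun (n : ℕ) (y : ℝ) => d n * y ^ n)
      (g' := fun (n : ℕ) (y : ℝ) => d n * ((n:ℝ) * y ^ (n-1)))
      (fun n y _ => (hasDerivAt_pow n y).const_mul (d n))
      hbound hzs (SdY z hzabs) hzs
    refine H.congr_of_eventuallyEq ?_
    filter_upwards [isOpen_Ioo.mem_nhds hzs] with y hy
    exact hgy y (hmem_abs y hy)
  have hderiv_eq : deriv g z = ∑' n : ℕ, d n * ((n:ℝ) * z ^ (n-1)) := hderivg.deriv
  -- reindexing the derivative series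
  have hSd' : Summable (fun n : ℕ => d (n+1) * (((n:ℝ)+1) * z ^ n)) := by
    refine Summable.of_norm_bounded
      (g := fun n => ((n:ℝ)+1) * wA (n+1) * r ^ n + q * (((n:ℝ)+1) * wB (n+1) * r ^ n))
      (SsA.add (SsB.mul_left q)) ?_
    intro n
    rw [norm_mul, norm_mul, norm_pow, Real.norm_of_nonneg (by positivity : (0:ℝ) ≤ (n:ℝ)+1)]
    calc |d (n+1)| * (((n:ℝ)+1) * |z| ^ n)
        ≤ (wA (n+1) + q * wB (n+1)) * (((n:ℝ)+1) * r ^ n) := by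
          apply mul_le_mul (habs (n+1))
            (mul_le_mul_of_nonneg_left (hpow z hzabs n) (by positivity))
            (by positivity)
            (by nlinarith [hwApos (n+1), hwBpos (n+1), mul_pos hq (hwBpos (n+1))])
      _ = ((n:ℝ)+1) * wA (n+1) * r ^ n + q * (((n:ℝ)+1) * wB (n+1) * r ^ n) := by ring
  have hSdz : Summable (fun n : ℕ => d n * ((n:ℝ) * z ^ (n-1))) := by
    refine (summable_nat_add_iff 1).mp (Summable.congr hSd' (fun n => ?_))
    simp only [Nat.add_sub_cancel]
    push_cast
    ring
  have hreindex : ∑' n : ℕ, d n * ((n:ℝ) * z ^ (n-1))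
      = ∑' n : ℕ, d (n+1) * (((n:ℝ)+1) * z ^ n) := by
    rw [Summable.tsum_eq_zero_add hSdz]
    simp only [Nat.cast_zero, zero_mul, mul_zero, zero_add]
    exact tsum_congr fun n => by
      simp only [Nat.add_sub_cancel]
      push_cast
      ring
  -- positivity of p
  have hp : 0 < (a₁ + (N:ℝ)) * (b₁ + (N:ℝ)) / (c + (N:ℝ)) :=
    div_pos (mul_pos (by linarith) (by linarith)) (by linarith)
  -- monotonicity of t ↦ (a₁+t)(b₁+t)/(c+t)
  have hmono : ∀ s t : ℝ, 0 ≤ t → t ≤ s →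
      (a₁+t)*(b₁+t)*(c+s) ≤ (a₁+s)*(b₁+s)*(c+t) := by
    intro s t ht hts
    have hs : 0 ≤ s := ht.trans hts
    have hfac : 0 ≤ (a₁+b₁)*c - a₁*b₁ + c*(s+t) + s*t := by
      nlinarith [mul_pos ha₁ hb₁, mul_nonneg ht hs, mul_nonneg hc0.le (by linarith : (0:ℝ) ≤ s + t),
        mul_lt_mul_of_pos_left hc (add_pos ha₁ hb₁), sq_nonneg (a₁ - b₁), sq_nonneg (a₁ + b₁)]
    nlinarith [mul_nonneg (sub_nonneg.2 hts) hfac]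
  -- key coefficient inequality
  have keylt : ∀ n : ℕ,
      (a₁ + (N:ℝ)) * (b₁ + (N:ℝ)) / (c + (N:ℝ)) * d n < ((n:ℝ)+1) * d (n+1) := by
    intro n
    have hn0 : (0:ℝ) ≤ (n:ℝ) := n.cast_nonneg
    have hPc : (0:ℝ) < poch c n := poch_pos hc0 n
    have hfac : (0:ℝ) < (n.factorial : ℝ) := by positivity
    have hD : (0:ℝ) < poch c n * (n.factorial : ℝ) := mul_pos hPc hfac
    have hcn : (0:ℝ) < c + (n:ℝ) := by linarith
    have hcN : (0:ℝ) < c + (N:ℝ) := by linarith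
    have hA : (0:ℝ) < poch a₁ n * poch b₁ n :=
      mul_pos (poch_pos ha₁ n) (poch_pos hb₁ n)
    have hB : (0:ℝ) < poch a₂ n * poch b₂ n :=
      mul_pos (poch_pos ha₂ n) (poch_pos hb₂ n)
    have hdn : d n = (poch a₁ n * poch b₁ n - q * (poch a₂ n * poch b₂ n))
        / (poch c n * (n.factorial : ℝ)) := rfl
    have hdsucc : d (n+1) =
        (poch a₁ n * poch b₁ n * ((a₁+(n:ℝ))*(b₁+(n:ℝ)))
          - q * (poch a₂ n * poch b₂ n * ((a₂+(n:ℝ))*(b₂+(n:ℝ)))))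
        / ((poch c n * (n.factorial : ℝ)) * ((c+(n:ℝ))*((n:ℝ)+1))) := by
      simp only [hd, poch_succ, Nat.factorial_succ]
      push_cast
      ring
    have hPQ : (a₂+(n:ℝ))*(b₂+(n:ℝ)) < (a₁+(n:ℝ))*(b₁+(n:ℝ)) :=
      mul_lt_mul (by linarith) (by linarith) (by linarith) (by linarith)
    have core : (a₁+(N:ℝ))*(b₁+(N:ℝ)) * (poch a₁ n * poch b₁ n - q * (poch a₂ n * poch b₂ n))
          * (c+(n:ℝ))
        < (poch a₁ n * poch b₁ n * ((a₁+(n:ℝ))*(b₁+(n:ℝ)))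
            - q * (poch a₂ n * poch b₂ n * ((a₂+(n:ℝ))*(b₂+(n:ℝ)))))
          * (c+(N:ℝ)) := by
      have hpos2 : 0 < q * (poch a₂ n * poch b₂ n)
          * (((a₁+(n:ℝ))*(b₁+(n:ℝ)) - (a₂+(n:ℝ))*(b₂+(n:ℝ)))*(c+(N:ℝ))) :=
        mul_pos (mul_pos hq hB) (mul_pos (sub_pos.2 hPQ) hcN)
      rcases le_or_gt N n with h | h
      · have h1 : 0 < poch a₁ n * poch b₁ n - q * (poch a₂ n * poch b₂ n) :=
          sub_pos.2 (hN₂ n h)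
        have h2 : (a₁+(N:ℝ))*(b₁+(N:ℝ))*(c+(n:ℝ)) ≤ (a₁+(n:ℝ))*(b₁+(n:ℝ))*(c+(N:ℝ)) :=
          hmono (n:ℝ) (N:ℝ) hN0 (Nat.cast_le.2 h)
        nlinarith [mul_nonneg h1.le (sub_nonneg.2 h2), hpos2]
      · have h1 : poch a₁ n * poch b₁ n - q * (poch a₂ n * poch b₂ n) ≤ 0 :=
          sub_nonpos.2 (hN₁ n h)
        have h2 : (a₁+(n:ℝ))*(b₁+(n:ℝ))*(c+(N:ℝ)) ≤ (a₁+(N:ℝ))*(b₁+(N:ℝ))*(c+(n:ℝ)) :=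
          hmono (N:ℝ) (n:ℝ) hn0 (Nat.cast_le.2 h.le)
        nlinarith [mul_nonneg (neg_nonneg.2 h1) (sub_nonneg.2 h2), hpos2]
    rw [hdn, hdsucc]
    have hLHS : (a₁ + (N:ℝ)) * (b₁ + (N:ℝ)) / (c + (N:ℝ))
          * ((poch a₁ n * poch b₁ n - q * (poch a₂ n * poch b₂ n))
            / (poch c n * (n.factorial : ℝ)))
        = (a₁+(N:ℝ))*(b₁+(N:ℝ)) * (poch a₁ n * poch b₁ n - q * (poch a₂ n * poch b₂ n))
          / ((c+(N:ℝ)) * (poch c n * (n.factorial : ℝ))) := by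
      field_simp
    have hRHS : ((n:ℝ)+1) *
        ((poch a₁ n * poch b₁ n * ((a₁+(n:ℝ))*(b₁+(n:ℝ)))
          - q * (poch a₂ n * poch b₂ n * ((a₂+(n:ℝ))*(b₂+(n:ℝ)))))
        / ((poch c n * (n.factorial : ℝ)) * ((c+(n:ℝ))*((n:ℝ)+1))))
        = (poch a₁ n * poch b₁ n * ((a₁+(n:ℝ))*(b₁+(n:ℝ)))
          - q * (poch a₂ n * poch b₂ n * ((a₂+(n:ℝ))*(b₂+(n:ℝ)))))
        / ((poch c n * (n.factorial : ℝ)) * (c+(n:ℝ))) := by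
      rw [eq_div_iff (by positivity)]
      field_simp
    rw [hLHS, hRHS, div_lt_div_iff₀ (by positivity) (by positivity)]
    nlinarith [mul_lt_mul_of_pos_right core hD]
  -- conclude
  rw [lt_div_iff₀ hp, hderiv_eq, hreindex, hgy z hzabs]
  have hmulcomm : (∑' n : ℕ, d n * z ^ n) * ((a₁ + (N:ℝ)) * (b₁ + (N:ℝ)) / (c + (N:ℝ)))
      = ∑' n : ℕ, (a₁ + (N:ℝ)) * (b₁ + (N:ℝ)) / (c + (N:ℝ)) * (d n * z ^ n) := by
    rw [tsum_mul_left, mul_comm]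
  rw [hmulcomm]
  refine Summable.tsum_lt_tsum (i := 0) (fun n => ?_) ?_ ((SdY z hzabs).mul_left _) hSd'
  · calc (a₁ + (N:ℝ)) * (b₁ + (N:ℝ)) / (c + (N:ℝ)) * (d n * z ^ n)
        = ((a₁ + (N:ℝ)) * (b₁ + (N:ℝ)) / (c + (N:ℝ)) * d n) * z ^ n := by ring
      _ ≤ (((n:ℝ)+1) * d (n+1)) * z ^ n :=
          mul_le_mul_of_nonneg_right (keylt n).le (pow_nonneg hz0 n)
      _ = d (n+1) * (((n:ℝ)+1) * z ^ n) := by ring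
  · have h0 := keylt 0
    simp only [Nat.cast_zero, zero_add, one_mul] at h0
    simpa [pow_zero] using h0
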